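/- Structure of strict codirect solutions for alphabetic morphisms: let σ, σ' : A → Option B be alphabetic morphisms and let w : List A with m := w.length ≥ 2 be a strict codirect solution witnessed by vs : List (List B). Then: (a) σ (w.get 0) ≠ none; (b) for every i with 1 ≤ i ≤ m there exists j ≤ m with (vs.take j).flatten = (w.take i).filterMap σ; writing g i for the least such j: (c) g i > i for every i with 1 ≤ i < m; (d) g m = m; (e) g is increasing on [1..m]: if 1 ≤ i ≤ i' ≤ m then g i ≤ g i'. -/

import Mathlib

/-!
Every block of `vs` is a sublist of some `(σ' a).toList`, so it has at most one letter. Hence the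
prefixes `(vs.take j).flatten` run through all prefixes of the common word
`w.filterMap σ = vs.flatten`, which gives (b). Since both families are prefixes of that one word, a
length comparison suffices to compare them: the strict inequality (4) pushes every `g i` past `i`,
prefix-closedness makes the least index `g` monotone, and `g (m - 1) > m - 1` together with
`g m ≤ m` pins down `g m = m`. Condition (4) at `k = 1` forbids `σ` to erase the first letter
of `w`.
-/

/-- `w` is a strict codirect solution with respect to the alphabetic morphisms
`σ, σ' : A → Option B`, witnessed by `vs`. -/
def AlphStrictCodirectWitness {A B : Type*} (σ σ' : A → Option B)
    (w : List A) (vs : List (List B)) : Prop :=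
  ∃ h : vs.length = w.length,
    (∀ k, ∀ hk : k < w.length,
      (vs.get ⟨k, by omega⟩).Sublist (σ' (w.get ⟨k, hk⟩)).toList) ∧
    w.filterMap σ = vs.flatten ∧
    (∀ k ≤ w.length, ((vs.take k).flatten).length ≤ ((w.take k).filterMap σ).length) ∧
    ∀ k, 1 ≤ k → k < w.length →
      ((vs.take k).flatten).length < ((w.take k).filterMap σ).length

namespace List

variable {α : Type*}

theorem exists_flatten_take_eq_of_prefix {vs : List (List α)} (hvs : ∀ v ∈ vs, v.length ≤ 1)
    {p : List α} (hp : p <+: vs.flatten) : ∃ j ≤ vs.length, (vs.take j).flatten = p := by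
  induction vs generalizing p with
  | nil => exact ⟨0, le_rfl, (prefix_nil.mp hp).symm⟩
  | cons v vs ih =>
    have hvs' : ∀ u ∈ vs, u.length ≤ 1 := fun u hu => hvs u (mem_cons_of_mem v hu)
    rcases p with _ | ⟨b, p⟩
    · exact ⟨0, Nat.zero_le _, rfl⟩
    rcases v with _ | ⟨c, _ | ⟨d, v⟩⟩
    · obtain ⟨j, hj, hjp⟩ := ih hvs' (by simpa using hp)
      exact ⟨j + 1, by simpa using hj, by simpa using hjp⟩
    · obtain ⟨rfl, hp'⟩ := cons_prefix_cons.mp hp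
      obtain ⟨j, hj, hjp⟩ := ih hvs' hp'
      exact ⟨j + 1, by simpa using hj, by simpa using hjp⟩
    · have := hvs _ mem_cons_self
      simp at this

theorem le_of_isLeast_flatten_take {vs : List (List α)} {p : List α} {j j' : ℕ}
    (hj : IsLeast {k | (vs.take k).flatten = p} j) (hp : p <+: (vs.take j').flatten) :
    j ≤ j' := by
  by_contra! hlt
  have hp' : (vs.take j').flatten <+: p := hj.1 ▸ (take_prefix_take_left hlt.le).flatten
  exact hlt.not_ge (hj.2 (hp'.eq_of_length (le_antisymm hp'.length_le hp.length_le)))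

end List

namespace AlphStrictCodirectWitness

variable {A B : Type*} {σ σ' : A → Option B} {w : List A} {vs : List (List B)}

theorem length_le_one (hcd : AlphStrictCodirectWitness σ σ' w vs) :
    ∀ v ∈ vs, v.length ≤ 1 := by
  obtain ⟨hlen, hsub, -⟩ := hcd
  intro v hv
  obtain ⟨k, hk, rfl⟩ := List.getElem_of_mem hv
  exact (hsub k (hlen ▸ hk)).length_le.trans Option.length_toList_le

theorem filterMap_take_prefix_flatten (hcd : AlphStrictCodirectWitness σ σ' w vs) (i : ℕ) :
    (w.take i).filterMap σ <+: vs.flatten := by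
  obtain ⟨-, -, hflat, -⟩ := hcd
  exact hflat ▸ (w.take_prefix i).filterMap σ

theorem exists_flatten_take_eq (hcd : AlphStrictCodirectWitness σ σ' w vs) (i : ℕ) :
    ∃ j ≤ w.length, (vs.take j).flatten = (w.take i).filterMap σ :=
  hcd.1 ▸ List.exists_flatten_take_eq_of_prefix hcd.length_le_one
    (hcd.filterMap_take_prefix_flatten i)

theorem flatten_take_length (hcd : AlphStrictCodirectWitness σ σ' w vs) :
    (vs.take w.length).flatten = (w.take w.length).filterMap σ := by
  obtain ⟨hlen, -, hflat, -⟩ := hcd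
  rw [← hlen, List.take_length, hlen, List.take_length, hflat]

theorem apply_get_zero_ne_none (hcd : AlphStrictCodirectWitness σ σ' w vs)
    (hw : 1 < w.length) : σ (w.get ⟨0, by omega⟩) ≠ none := by
  obtain ⟨-, -, -, -, hstrict⟩ := hcd
  obtain _ | ⟨a, w⟩ := w
  · simp at hw
  intro (h0 : σ a = none)
  simpa [h0] using hstrict 1 le_rfl hw

theorem lt_of_flatten_take_eq (hcd : AlphStrictCodirectWitness σ σ' w vs) {i j : ℕ}
    (hi : 1 ≤ i) (hiw : i < w.length) (hj : (vs.take j).flatten = (w.take i).filterMap σ) :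
    i < j := by
  obtain ⟨-, -, -, -, hstrict⟩ := hcd
  by_contra! hji
  have hmono : ((vs.take j).flatten).length ≤ ((vs.take i).flatten).length :=
    ((List.take_prefix_take_left hji).flatten).length_le
  rw [hj] at hmono
  exact (hstrict i hi hiw).not_ge hmono

end AlphStrictCodirectWitness

/-- Structure of strict codirect solutions for alphabetic morphisms. -/
theorem strict_codirect_structure {A B : Type*} (σ σ' : A → Option B)
    (w : List A) (vs : List (List B)) (hm : 2 ≤ w.length)
    (hcd : AlphStrictCodirectWitness σ σ' w vs) :
    -- (a)
    σ (w.get ⟨0, by omega⟩) ≠ none ∧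
    -- (b)
    (∀ i, 1 ≤ i → i ≤ w.length →
      ∃ j ≤ w.length, (vs.take j).flatten = (w.take i).filterMap σ) ∧
    -- for g i the least such j:
    ∀ g : ℕ → ℕ,
      (∀ i, 1 ≤ i → i ≤ w.length →
        (vs.take (g i)).flatten = (w.take i).filterMap σ ∧
        ∀ j, (vs.take j).flatten = (w.take i).filterMap σ → g i ≤ j) →
      -- (c)
      (∀ i, 1 ≤ i → i < w.length → i < g i) ∧
      -- (d)
      g w.length = w.length ∧
      -- (e)
      ∀ i i', 1 ≤ i → i ≤ i' → i' ≤ w.length → g i ≤ g i' := by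
  refine ⟨hcd.apply_get_zero_ne_none hm, fun i _ _ => hcd.exists_flatten_take_eq i,
    fun g hg => ?_⟩
  have hc : ∀ i, 1 ≤ i → i < w.length → i < g i := fun i hi hiw =>
    hcd.lt_of_flatten_take_eq hi hiw (hg i hi hiw.le).1
  have he : ∀ i i', 1 ≤ i → i ≤ i' → i' ≤ w.length → g i ≤ g i' := fun i i' hi hii' hi'w =>
    List.le_of_isLeast_flatten_take (hg i hi (hii'.trans hi'w))
      ((hg i' (hi.trans hii') hi'w).1 ▸ ((List.take_prefix_take_left hii').filterMap σ))
  have hd_le : g w.length ≤ w.length := (hg _ (by omega) le_rfl).2 _ hcd.flatten_take_length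
  have hd_ge : w.length - 1 < g w.length :=
    (hc _ (by omega) (by omega)).trans_le (he _ _ (by omega) (by omega) le_rfl)
  exact ⟨hc, by omega, he⟩
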